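/- For all x > 0, the digamma function satisfies log(x + 1/2) ≤ ψ(x+1) ≤ log x + 1/(2x). -/

import Mathlib

open Real Set Filter

/-- The digamma function, the logarithmic derivative of the Gamma function. -/
noncomputable def digamma (x : ℝ) : ℝ := deriv (fun y => Real.log (Real.Gamma y)) x



-- calculus lemma (a): 2u ≤ log(1+u) - log(1-u) for 0 ≤ u < 1
lemma log_ratio_ge {u : ℝ} (h0 : 0 ≤ u) (h1 : u < 1) :
    2 * u ≤ Real.log (1 + u) - Real.log (1 - u) := by
  set F : ℝ → ℝ := fun v => Real.log (1 + v) - Real.log (1 - v) - 2 * v with hF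
  have key : ∀ v ∈ Icc (0:ℝ) u, HasDerivAt F (1/(1+v) + 1/(1-v) - 2) v := by
    intro v hv
    have hv1 : (0:ℝ) < 1 + v := by cases hv; linarith
    have hv2 : (0:ℝ) < 1 - v := by cases hv; linarith
    have d1 : HasDerivAt (fun v : ℝ => Real.log (1 + v)) (1/(1+v)) v := by
      have := (Real.hasDerivAt_log hv1.ne').comp v ((hasDerivAt_id v).const_add 1)
      simpa [one_div, Function.comp_def] using this
    have d2 : HasDerivAt (fun v : ℝ => Real.log (1 - v)) (-(1/(1-v))) v := by
      have := (Real.hasDerivAt_log hv2.ne').comp v ((hasDerivAt_id v).const_sub 1)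
      simpa [one_div, Function.comp_def] using this
    have d3 : HasDerivAt (fun v : ℝ => 2 * v) 2 v := by
      simpa using (hasDerivAt_id v).const_mul 2
    have := (d1.sub d2).sub d3
    convert this using 1
    · rfl
    · rfl
    · rfl
    · ring
  have hmono : MonotoneOn F (Icc 0 u) := by
    apply monotoneOn_of_deriv_nonneg (convex_Icc 0 u)
    · exact fun v hv => ((key v hv).continuousAt).continuousWithinAt
    · intro v hv
      rw [interior_Icc] at hv
      exact ((key v (Ioo_subset_Icc_self hv)).differentiableAt).differentiableWithinAt
    · intro v hv
      rw [interior_Icc] at hv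
      rw [(key v (Ioo_subset_Icc_self hv)).deriv]
      have hv1 : (0:ℝ) < 1 + v := by cases hv; linarith
      have hv2 : (0:ℝ) < 1 - v := by cases hv; linarith
      have : 1/(1+v) + 1/(1-v) - 2 = 2 * v^2 / ((1+v)*(1-v)) := by
        field_simp; ring
      rw [this]; positivity
  have h0u : (0:ℝ) ∈ Icc (0:ℝ) u := ⟨le_refl _, h0⟩
  have huu : u ∈ Icc (0:ℝ) u := ⟨h0, le_refl _⟩
  have := hmono h0u huu h0
  simp only [hF] at this
  simp at this
  linarith

-- calculus lemma (b): log(1+u) - log(1-u) ≤ 2u/(1-u²) for 0 ≤ u < 1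
lemma log_ratio_le {u : ℝ} (h0 : 0 ≤ u) (h1 : u < 1) :
    Real.log (1 + u) - Real.log (1 - u) ≤ 2 * u / (1 - u^2) := by
  set G : ℝ → ℝ := fun v => 2 * v / (1 - v^2) - (Real.log (1 + v) - Real.log (1 - v)) with hG
  have key : ∀ v ∈ Icc (0:ℝ) u, HasDerivAt G
      ((2 * (1 - v^2) - 2*v*(-(2*v)))/(1-v^2)^2 - (1/(1+v) + 1/(1-v))) v := by
    intro v hv
    have hv1 : (0:ℝ) < 1 + v := by cases hv; linarith
    have hv2 : (0:ℝ) < 1 - v := by cases hv; linarith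
    have hv3 : (1:ℝ) - v^2 ≠ 0 := by nlinarith [hv.1, hv.2]
    have d1 : HasDerivAt (fun v : ℝ => Real.log (1 + v)) (1/(1+v)) v := by
      have := (Real.hasDerivAt_log hv1.ne').comp v ((hasDerivAt_id v).const_add 1)
      simpa [one_div, Function.comp_def] using this
    have d2 : HasDerivAt (fun v : ℝ => Real.log (1 - v)) (-(1/(1-v))) v := by
      have := (Real.hasDerivAt_log hv2.ne').comp v ((hasDerivAt_id v).const_sub 1)
      simpa [one_div, Function.comp_def] using this
    have dn : HasDerivAt (fun v : ℝ => 2 * v) 2 v := by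
      simpa using (hasDerivAt_id v).const_mul 2
    have dd : HasDerivAt (fun v : ℝ => 1 - v^2) (-(2*v)) v := by
      have := ((hasDerivAt_pow 2 v).const_sub 1)
      simpa using this
    have dq := dn.div dd hv3
    have := dq.sub (d1.sub d2)
    convert this using 1
    · rfl
    · rfl
    · rfl
    · ring
  have hmono : MonotoneOn G (Icc 0 u) := by
    apply monotoneOn_of_deriv_nonneg (convex_Icc 0 u)
    · exact fun v hv => ((key v hv).continuousAt).continuousWithinAt
    · intro v hv
      rw [interior_Icc] at hv
      exact ((key v (Ioo_subset_Icc_self hv)).differentiableAt).differentiableWithinAt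
    · intro v hv
      rw [interior_Icc] at hv
      rw [(key v (Ioo_subset_Icc_self hv)).deriv]
      have hv1 : (0:ℝ) < 1 + v := by cases hv; linarith
      have hv2 : (0:ℝ) < 1 - v := by cases hv; linarith
      have : (2 * (1 - v^2) - 2*v*(-(2*v)))/(1-v^2)^2 - (1/(1+v) + 1/(1-v))
          = 4 * v^2 / (1-v^2)^2 := by
        rw [show (1:ℝ) - v^2 = (1+v)*(1-v) by ring]
        field_simp
        ring
      rw [this]; positivity
  have h0u : (0:ℝ) ∈ Icc (0:ℝ) u := ⟨le_refl _, h0⟩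
  have huu : u ∈ Icc (0:ℝ) u := ⟨h0, le_refl _⟩
  have := hmono h0u huu h0
  simp only [hG] at this
  simp at this
  linarith





-- midpoint: 1/t ≤ log(t+1/2) - log(t-1/2) for t > 1/2
lemma one_div_le_log_diff {t : ℝ} (ht : 1/2 < t) :
    1/t ≤ Real.log (t + 1/2) - Real.log (t - 1/2) := by
  have ht0 : 0 < t := by linarith
  have h0 : (0:ℝ) ≤ 1/(2*t) := by positivity
  have h1 : 1/(2*t) < 1 := by rw [div_lt_one (by linarith)]; linarith
  have key := log_ratio_ge h0 h1
  have e1 : (1:ℝ) + 1/(2*t) = (t + 1/2)/t := by field_simp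
  have e2 : (1:ℝ) - 1/(2*t) = (t - 1/2)/t := by field_simp
  rw [e1, e2, Real.log_div (by linarith) ht0.ne', Real.log_div (by linarith) ht0.ne'] at key
  have : 2 * (1/(2*t)) = 1/t := by field_simp
  rw [this] at key
  linarith

-- trapezoid: log(a+1) - log a ≤ 1/(2a) + 1/(2(a+1)) for a > 0
lemma log_diff_le_trapezoid {a : ℝ} (ha : 0 < a) :
    Real.log (a + 1) - Real.log a ≤ 1/(2*a) + 1/(2*(a+1)) := by
  have h2a : (0:ℝ) < 2*a+1 := by linarith
  have h0 : (0:ℝ) ≤ 1/(2*a+1) := by positivity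
  have h1 : 1/(2*a+1) < 1 := by rw [div_lt_one h2a]; linarith
  have key := log_ratio_le h0 h1
  have e1 : (1:ℝ) + 1/(2*a+1) = (a+1) * (2/(2*a+1)) := by field_simp; ring
  have e2 : (1:ℝ) - 1/(2*a+1) = a * (2/(2*a+1)) := by field_simp; ring
  have hne : (2:ℝ)/(2*a+1) ≠ 0 := by positivity
  rw [e1, e2, Real.log_mul (by linarith) hne, Real.log_mul ha.ne' hne] at key
  have e3 : 2 * (1/(2*a+1)) / (1 - (1/(2*a+1))^2) = 1/(2*a) + 1/(2*(a+1)) := by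
    rw [show (1:ℝ) - (1/(2*a+1))^2 = (2*a)*(2*a+2)/(2*a+1)^2 by field_simp; ring]
    field_simp
    ring
  rw [e3] at key
  linarith






lemma hasDerivAt_logGamma {p : ℝ} (hp : 0 < p) :
    HasDerivAt (fun y => Real.log (Real.Gamma y)) (digamma p) p := by
  have hd : DifferentiableAt ℝ (fun y => Real.log (Real.Gamma y)) p := by
    apply DifferentiableAt.log
    · exact Real.differentiableAt_Gamma fun m => by
        intro h; rw [h] at hp
        have : (0:ℝ) ≤ (m:ℝ) := Nat.cast_nonneg m
        linarith
    · exact (Real.Gamma_pos_of_pos hp).ne'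
  exact hd.hasDerivAt

lemma digamma_add_one {p : ℝ} (hp : 0 < p) : digamma (p + 1) = digamma p + 1/p := by
  have h1 : HasDerivAt (fun y => Real.log (Real.Gamma (y + 1))) (digamma (p + 1)) p := by
    have := (hasDerivAt_logGamma (by linarith : (0:ℝ) < p + 1)).comp p
      ((hasDerivAt_id p).add_const 1)
    simpa [Function.comp_def] using this
  have h2 : HasDerivAt (fun y => Real.log y + Real.log (Real.Gamma y)) (1/p + digamma p) p := by
    have := (Real.hasDerivAt_log hp.ne').add (hasDerivAt_logGamma hp)
    simpa [one_div, Pi.add_def] using this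
  have heq : (fun y => Real.log (Real.Gamma (y + 1)))
      =ᶠ[nhds p] fun y => Real.log y + Real.log (Real.Gamma y) := by
    filter_upwards [eventually_gt_nhds hp] with y hy
    rw [Real.Gamma_add_one hy.ne', Real.log_mul hy.ne' (Real.Gamma_pos_of_pos hy).ne']
  have h2' : HasDerivAt (fun y => Real.log (Real.Gamma (y + 1))) (1/p + digamma p) p :=
    h2.congr_of_eventuallyEq heq
  have := h1.unique h2'
  linarith

-- convexity bounds
lemma digamma_le_log {y : ℝ} (hy : 0 < y) : digamma y ≤ Real.log y := by
  have hc := Real.convexOn_log_Gamma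
  have hmem1 : y ∈ Ioi (0:ℝ) := hy
  have hmem2 : y + 1 ∈ Ioi (0:ℝ) := by simp; linarith
  have := hc.le_slope_of_hasDerivAt hmem1 hmem2 (by linarith)
    (by exact hasDerivAt_logGamma hy)
  rw [slope_def_field] at this
  have hG : Real.log (Real.Gamma (y+1)) - Real.log (Real.Gamma y) = Real.log y := by
    rw [Real.Gamma_add_one hy.ne', Real.log_mul hy.ne' (Real.Gamma_pos_of_pos hy).ne']
    ring
  simp only [Function.comp] at this
  rw [show y + 1 - y = 1 by ring] at this
  rw [hG] at this
  simpa using this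

lemma log_le_digamma_add_one {y : ℝ} (hy : 0 < y) : Real.log y ≤ digamma (y + 1) := by
  have hc := Real.convexOn_log_Gamma
  have hmem1 : y ∈ Ioi (0:ℝ) := hy
  have hmem2 : y + 1 ∈ Ioi (0:ℝ) := by simp; linarith
  have := hc.slope_le_of_hasDerivAt hmem1 hmem2 (by linarith)
    (by exact hasDerivAt_logGamma (by linarith))
  rw [slope_def_field] at this
  have hG : Real.log (Real.Gamma (y+1)) - Real.log (Real.Gamma y) = Real.log y := by
    rw [Real.Gamma_add_one hy.ne', Real.log_mul hy.ne' (Real.Gamma_pos_of_pos hy).ne']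
    ring
  simp only [Function.comp] at this
  rw [show y + 1 - y = 1 by ring] at this
  rw [hG] at this
  simpa using this

-- telescoping
lemma digamma_add_nat {x : ℝ} (hx : 0 < x) (n : ℕ) :
    digamma (x + 1 + n) = digamma (x + 1) + ∑ k ∈ Finset.range n, 1/(x + 1 + k) := by
  induction n with
  | zero => simp
  | succ n ih =>
    have hpos : (0:ℝ) < x + 1 + n := by positivity
    rw [show x + 1 + ((n:ℕ)+1:ℕ) = x + 1 + (n:ℝ) + 1 by push_cast; ring,
      digamma_add_one hpos, ih, Finset.sum_range_succ]
    ring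







/-- Digamma inequalities: for `x > 0`, `log(x + 1/2) ≤ ψ(x+1) ≤ log x + 1/(2x)`. -/
theorem digamma_inequalities (x : ℝ) (hx : 0 < x) :
    Real.log (x + 1/2) ≤ digamma (x + 1) ∧ digamma (x + 1) ≤ Real.log x + 1/(2*x) := by
  set S : ℕ → ℝ := fun n => ∑ k ∈ Finset.range n, 1/(x + 1 + k) with hS
  have hxn : ∀ n : ℕ, (0:ℝ) < x + n := fun n => by positivity
  -- limit machinery
  have htend : Tendsto (fun n : ℕ => (x + (n:ℝ))⁻¹) atTop (nhds 0) := by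
    apply Filter.Tendsto.inv_tendsto_atTop
    exact tendsto_atTop_add_const_left _ x tendsto_natCast_atTop_atTop
  -- LOWER BOUND
  have hlower : Real.log (x + 1/2) ≤ digamma (x + 1) := by
    have key : ∀ n : ℕ, Real.log (x + 1/2) ≤ digamma (x + 1) + (1/2) * (x + n)⁻¹ := by
      intro n
      have hsum := digamma_add_nat hx n
      -- digamma (x+1+n) ≥ log (x+n)
      have h1 : Real.log (x + n) ≤ digamma (x + 1 + n) := by
        have := log_le_digamma_add_one (hxn n)
        rwa [show x + (n:ℝ) + 1 = x + 1 + n by ring] at this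
      -- S n ≤ log(x+n+1/2) - log(x+1/2)
      have h2 : S n ≤ Real.log (x + n + 1/2) - Real.log (x + 1/2) := by
        have tele : ∑ k ∈ Finset.range n,
            (Real.log (x + (k+1:ℕ) + 1/2) - Real.log (x + k + 1/2))
            = Real.log (x + n + 1/2) - Real.log (x + 1/2) := by
          rw [Finset.sum_range_sub (fun k : ℕ => Real.log (x + k + 1/2)) n]
          norm_num
        rw [← tele]
        apply Finset.sum_le_sum
        intro k _
        have ht : 1/2 < x + 1 + (k:ℝ) := by
          have : (0:ℝ) ≤ (k:ℝ) := Nat.cast_nonneg k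
          linarith
        have := one_div_le_log_diff ht
        rw [show x + 1 + (k:ℝ) + 1/2 = x + ((k:ℕ)+1:ℕ) + 1/2 by push_cast; ring,
          show x + 1 + (k:ℝ) - 1/2 = x + (k:ℝ) + 1/2 by ring] at this
        exact this
      -- gap: log(x+n+1/2) - log(x+n) ≤ (1/2)/(x+n)
      have h3 : Real.log (x + n + 1/2) - Real.log (x + n) ≤ (1/2) * (x + n)⁻¹ := by
        rw [← Real.log_div (by have := hxn n; linarith) (hxn n).ne']
        have hq : (0:ℝ) < (x + n + 1/2) / (x + n) := by
          apply div_pos (by have := hxn n; linarith) (hxn n)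
        have := Real.log_le_sub_one_of_pos hq
        have he : (x + (n:ℝ) + 1/2) / (x + n) - 1 = (1/2) * (x + n)⁻¹ := by
          field_simp
          ring
        linarith
      linarith
    have htend2 : Tendsto (fun n : ℕ => digamma (x + 1) + (1/2) * (x + (n:ℝ))⁻¹)
        atTop (nhds (digamma (x + 1))) := by
      have := (htend.const_mul (1/2 : ℝ)).const_add (digamma (x+1))
      simpa using this
    exact ge_of_tendsto' htend2 key
  -- UPPER BOUND
  have hupper : digamma (x + 1) ≤ Real.log x + 1/(2*x) := by
    have key : ∀ n : ℕ, digamma (x + 1) ≤ Real.log x + 1/(2*x) + (x + n)⁻¹ := by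
      intro n
      have hsum := digamma_add_nat hx n
      have h1 : digamma (x + 1 + n) ≤ Real.log (x + 1 + n) := digamma_le_log (by positivity)
      -- log(x+n) - log x ≤ S n + 1/(2x) - 1/(2(x+n))
      have h2 : Real.log (x + n) - Real.log x ≤ S n + 1/(2*x) - 1/(2*(x + n)) := by
        have tele1 : ∑ k ∈ Finset.range n,
            (Real.log (x + (k+1:ℕ)) - Real.log (x + k))
            = Real.log (x + n) - Real.log x := by
          rw [Finset.sum_range_sub (fun k : ℕ => Real.log (x + k)) n]
          norm_num
        have tele2 : ∑ k ∈ Finset.range n,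
            (1/(2*(x + (k:ℕ))) - 1/(2*(x + (k+1:ℕ))))
            = 1/(2*x) - 1/(2*(x + n)) := by
          rw [Finset.sum_range_sub' (fun k : ℕ => 1/(2*(x + (k:ℕ)))) n]
          norm_num
        have hterm : ∀ k ∈ Finset.range n,
            Real.log (x + (k+1:ℕ)) - Real.log (x + k)
            ≤ 1/(x + 1 + k) + (1/(2*(x + (k:ℕ))) - 1/(2*(x + (k+1:ℕ)))) := by
          intro k _
          have hak : (0:ℝ) < x + k := hxn k
          have := log_diff_le_trapezoid hak
          push_cast
          push_cast at this
          have he : 1/(x + 1 + (k:ℝ)) + (1/(2*(x + k)) - 1/(2*(x + k + 1)))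
              = 1/(2*(x + k)) + 1/(2*(x + k + 1)) := by
            have : (0:ℝ) < x + k + 1 := by linarith
            field_simp
            ring
          rw [show x + ((k:ℝ)+1) = x + (k:ℝ) + 1 by ring, he]
          exact this
        calc Real.log (x + n) - Real.log x
            = ∑ k ∈ Finset.range n, (Real.log (x + (k+1:ℕ)) - Real.log (x + k)) := tele1.symm
          _ ≤ ∑ k ∈ Finset.range n, (1/(x + 1 + k) + (1/(2*(x + (k:ℕ))) - 1/(2*(x + (k+1:ℕ))))) :=
              Finset.sum_le_sum hterm
          _ = S n + (1/(2*x) - 1/(2*(x + n))) := by rw [Finset.sum_add_distrib, tele2]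
          _ = S n + 1/(2*x) - 1/(2*(x + n)) := by ring
      -- gap: log(x+1+n) - log(x+n) ≤ 1/(x+n)
      have h3 : Real.log (x + 1 + n) - Real.log (x + n) ≤ (x + n)⁻¹ := by
        rw [← Real.log_div (by have := hxn n; linarith) (hxn n).ne']
        have hq : (0:ℝ) < (x + 1 + n) / (x + n) := by
          apply div_pos (by have := hxn n; linarith) (hxn n)
        have := Real.log_le_sub_one_of_pos hq
        have he : (x + 1 + (n:ℝ)) / (x + n) - 1 = (x + n)⁻¹ := by
          field_simp
          ring
        linarith
      have hn2 : (0:ℝ) < 2*(x+n) := by have := hxn n; linarith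
      have : 0 ≤ 1/(2*(x + (n:ℝ))) := by positivity
      linarith
    have htend2 : Tendsto (fun n : ℕ => Real.log x + 1/(2*x) + (x + (n:ℝ))⁻¹)
        atTop (nhds (Real.log x + 1/(2*x))) := by
      have := htend.const_add (Real.log x + 1/(2*x))
      simpa using this
    exact ge_of_tendsto' htend2 key
  exact ⟨hlower, hupper⟩
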